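/- Let w̄ be the unique fixed point of θ, set ψ = θ ∘ θ, μ = βδ, q = 1 + 2κ/δ, and define h(x) = x·artanh(√(1−x)) + √(1−x) for x ∈ (0,1). Assume μ > 4. Then θ'(w̄) < −1 (equivalently, ψ'(w̄) = θ'(w̄)² > 1, i.e., the symmetric rest point is unstable) if and only if |q| < h(4/μ). -/

import Mathlib

/-- `ρ(w) = 1/(1 + e^w)`. -/
noncomputable def logitρ (w : ℝ) : ℝ := 1 / (1 + Real.exp w)

/-- `θ(w) = β(κ + δ ρ(w))`, the one player map in the symmetric `2×2` game. -/
noncomputable def mapθ (κ δ β w : ℝ) : ℝ := β * (κ + δ * logitρ w)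

/-- The inverse hyperbolic tangent, `artanh(y) = (1/2)·ln((1+y)/(1-y))`. -/
noncomputable def artanh (y : ℝ) : ℝ := (1 / 2) * Real.log ((1 + y) / (1 - y))

/-- `h(x) = x·artanh(√(1-x)) + √(1-x)`. -/
noncomputable def stabBoundary (x : ℝ) : ℝ :=
  x * artanh (Real.sqrt (1 - x)) + Real.sqrt (1 - x)

lemma artanh_neg (y : ℝ) : artanh (-y) = - artanh y := by
  unfold artanh
  have h : (1 + -y) / (1 - -y) = ((1 + y) / (1 - y))⁻¹ := by
    rw [inv_div]; ring_nf
  rw [h, Real.log_inv]; ring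

lemma artanh_lt_artanh {t s : ℝ} (ht : -1 < t) (hs : s < 1) (hts : t < s) :
    artanh t < artanh s := by
  have h1 : (0:ℝ) < 1 - t := by linarith
  have h2 : (0:ℝ) < 1 + t := by linarith
  have h3 : (0:ℝ) < 1 - s := by linarith
  have h4 : (0:ℝ) < 1 + s := by linarith
  unfold artanh
  have hlt : (1 + t) / (1 - t) < (1 + s) / (1 - s) := by
    rw [div_lt_div_iff₀ h1 h3]; nlinarith
  have := Real.log_lt_log (by positivity) hlt
  linarith

lemma g_strictMonoOn (x : ℝ) (hx : 0 < x) :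
    StrictMonoOn (fun t => t + x * artanh t) (Set.Ioo (-1:ℝ) 1) := by
  intro a ha b hb hab
  have := artanh_lt_artanh ha.1 hb.2 hab
  dsimp only
  nlinarith

set_option maxHeartbeats 1000000 in
/-- Characterization of instability of the symmetric rest point: for `μ = βδ > 4`
and `q = 1 + 2κ/δ`, one has `θ'(w̄) < -1` (equivalently `ψ'(w̄) > 1`) if and only if
`|q| < h(4/μ)`. -/
theorem symmetric_instability_iff (κ δ β : ℝ) (hδ : 0 < δ) (hβ : 0 < β)
    (wb : ℝ) (hwb : mapθ κ δ β wb = wb)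
    (μ q : ℝ) (hμ : μ = β * δ) (hq : q = 1 + 2 * κ / δ) (hμ4 : 4 < μ) :
    deriv (mapθ κ δ β) wb < -1 ↔ |q| < stabBoundary (4 / μ) := by
  have hμ0 : 0 < μ := by linarith
  set E := Real.exp wb with hE
  have hEpos : 0 < E := Real.exp_pos wb
  have hE1 : (0:ℝ) < 1 + E := by linarith
  -- derivative of the map
  have hfun : mapθ κ δ β = fun w => β * κ + β * δ * (1 + Real.exp w)⁻¹ := by
    funext w; unfold mapθ logitρ; rw [one_div]; ring
  have h1 : HasDerivAt (fun w => 1 + Real.exp w) E wb := by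
    simpa using (Real.hasDerivAt_exp wb).const_add 1
  have h2 : HasDerivAt (fun w => (1 + Real.exp w)⁻¹) (-E / (1 + E) ^ 2) wb := by
    exact h1.inv (ne_of_gt hE1)
  have hd : HasDerivAt (mapθ κ δ β) (β * δ * (-E / (1 + E) ^ 2)) wb := by
    rw [hfun]
    exact (h2.const_mul (β * δ)).const_add (β * κ)
  -- the instability condition in terms of E
  have key : deriv (mapθ κ δ β) wb < -1 ↔ (1 + E) ^ 2 < μ * E := by
    rw [hd.deriv, hμ,
      show β * δ * (-E / (1 + E) ^ 2) = -(β * δ * E / (1 + E) ^ 2) by ring,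
      neg_lt_neg_iff, lt_div_iff₀ (by positivity : (0:ℝ) < (1 + E) ^ 2)]
    constructor <;> intro h <;> nlinarith
  -- the variable t = tanh(wb/2)
  set t := (E - 1) / (E + 1) with hts
  have ht1 : -1 < t := by
    rw [lt_div_iff₀ (by linarith : (0:ℝ) < E + 1)]; linarith
  have ht2 : t < 1 := by
    rw [div_lt_iff₀ (by linarith : (0:ℝ) < E + 1)]; linarith
  have hteq : t * (E + 1) = E - 1 := by
    rw [hts, div_mul_cancel₀ _ (ne_of_gt (by linarith : (0:ℝ) < E + 1))]
  -- artanh t = wb / 2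
  have hart : artanh t = wb / 2 := by
    unfold artanh
    have hA : (1 + t) / (1 - t) = E := by
      rw [div_eq_iff (by nlinarith : (1:ℝ) - t ≠ 0)]
      nlinarith
    rw [hA, hE, Real.log_exp]; ring
  -- fixed point relation
  have hκ : β * κ + β * δ * (1 / (1 + E)) = wb := by
    have := hwb; unfold mapθ logitρ at this; rw [← hE] at this; linarith [this]
  have hκ' : β * κ * (1 + E) + β * δ = wb * (1 + E) := by
    have h := hκ
    field_simp at h
    linarith
  -- q = t + (4/μ) * artanh t
  have hqeq : q = t + (4 / μ) * artanh t := by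
    rw [hart, hq, hts, hμ]
    field_simp
    linear_combination 4 * hκ'
  set x : ℝ := 4 / μ with hxs
  have hx0 : 0 < x := by positivity
  have hx1 : x < 1 := by
    rw [hxs, div_lt_one hμ0]; linarith
  set s := Real.sqrt (1 - x) with hss
  have hs2 : s ^ 2 = 1 - x := Real.sq_sqrt (by linarith)
  have hs0 : 0 < s := Real.sqrt_pos.mpr (by linarith)
  have hs1 : s < 1 := by nlinarith
  have h1t : (1 - t ^ 2) * (E + 1) ^ 2 = 4 * E := by
    linear_combination (-(E - 1) - t * (E + 1)) * hteq
  have hxμ : x * μ = 4 := by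
    rw [hxs]; field_simp
  have hkey2 : (1 - x - t ^ 2) * ((E + 1) ^ 2 * μ) = 4 * (μ * E - (1 + E) ^ 2) := by
    linear_combination μ * h1t - (E + 1) ^ 2 * hxμ
  have hEμpos : 0 < (E + 1) ^ 2 * μ := by positivity
  clear_value E t x s
  clear hwb hκ hκ' hfun h1 h2 hd hq hμ hart
  -- (1+E)^2 < μ E  ↔  |t| < s
  have step1 : (1 + E) ^ 2 < μ * E ↔ |t| < s := by
    rw [abs_lt]
    constructor
    · intro h
      have hpos : 0 < 1 - x - t ^ 2 := by
        by_contra hc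
        push_neg at hc
        nlinarith [hkey2]
      have ht2' : t ^ 2 < s ^ 2 := by rw [hs2]; linarith
      constructor <;> nlinarith [hs0]
    · rintro ⟨h1', h2'⟩
      have ht2' : t ^ 2 < s ^ 2 := by nlinarith [mul_pos (by linarith : (0:ℝ) < s - t) (by linarith : (0:ℝ) < s + t)]
      rw [hs2] at ht2'
      nlinarith [hkey2]
  -- |t| < s ↔ |q| < stabBoundary x
  have hmono := g_strictMonoOn x hx0
  have hsm : s ∈ Set.Ioo (-1:ℝ) 1 := ⟨by linarith, hs1⟩
  have hnsm : -s ∈ Set.Ioo (-1:ℝ) 1 := ⟨by linarith, by linarith⟩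
  have htm : t ∈ Set.Ioo (-1:ℝ) 1 := ⟨ht1, ht2⟩
  have hgs : stabBoundary x = s + x * artanh s := by
    unfold stabBoundary; rw [← hss]; ring
  have hgneg : -s + x * artanh (-s) = -(s + x * artanh s) := by
    rw [artanh_neg]; ring
  have e1 : t + x * artanh t < s + x * artanh s ↔ t < s := by
    have h := hmono.lt_iff_lt htm hsm
    simpa using h
  have e2 : -(s + x * artanh s) < t + x * artanh t ↔ -s < t := by
    have h := hmono.lt_iff_lt hnsm htm
    rw [← hgneg]
    simpa using h
  have step2 : |t| < s ↔ |q| < stabBoundary x := by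
    rw [hgs, hqeq, abs_lt, abs_lt]
    exact (and_congr e2 e1).symm
  rw [key, step1, step2, hxs]
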